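/- arXiv:1503.08546 — 2 statements merged into one kernel-verified Lean document; each statement's English description precedes it below -/
import Mathlib

section
/- There exists a unique sequence (R_n)_{n≥0} of elements of A[λ] such that R_0 = 1, each R_n for n ≥ 1 has zero constant term, and the Lenard recursion (2n+1) ∂_x R_{n+1} = u_1 · R_n + 2 u_0 · ∂_x R_n + (λ²/4) ∂_x³ R_n holds for all n ≥ 0. In particular R_1 = u_0 and R_2 = u_0²/2 + (λ²/12) u_2. -/
/-!
Write `F q = u₁ q + 2 u₀ ∂q + (λ²/4) ∂³q` for the Lenard operator. The symmetric form
`G(f, g) = 2 u₀ f g + (λ²/4) (f ∂²g + ∂²f g - ∂f ∂g)` satisfies `∂ G(f, g) = f F g + g F f`.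
Hence if `T₀ = 1` and `T_{m+1}` is solved from `∑_{i+j=m+1} T_i T_j = ∑_{i+j=m} G(T_i, T_j)`,
differentiating this identity and cancelling the terms known by induction gives
`∂ T_{m+1} = F T_m`, and `R_n = T_n / (2n-1)!!` solves the Lenard recursion. Every `T_{m+1}` lies
in the ideal generated by `u₀` and the image of `∂`, so it has no constant term.

Uniqueness: on `A` the kernel of `∂ₓ` consists of the constants, since
`[∂/∂u_{n+1}, ∂ₓ] = ∂/∂u_n` lets one remove the variables one at a time from the top.
-/

open MvPolynomial

/-- The derivation `∂ₓ = Σ_{k≥0} u_{k+1} ∂/∂u_k` on `A = ℝ[u₀, u₁, …]`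
(the sum is finite on each polynomial). -/
noncomputable def dx (f : MvPolynomial ℕ ℝ) : MvPolynomial ℕ ℝ :=
  ∑ᶠ k : ℕ, X (k + 1) * pderiv k f

/-- The λ-linear extension of `∂ₓ` to `A[λ]` (acting on coefficients). -/
noncomputable def dxP (p : Polynomial (MvPolynomial ℕ ℝ)) :
    Polynomial (MvPolynomial ℕ ℝ) :=
  p.sum fun n a => Polynomial.C (dx a) * Polynomial.X ^ n

/-- `p ∈ A[λ]` has zero constant term: the constant term (in the variables `u_k`)
of every `λ`-coefficient of `p` vanishes. -/
def NoConst (p : Polynomial (MvPolynomial ℕ ℝ)) : Prop :=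
  ∀ i : ℕ, coeff 0 (p.coeff i) = 0

/-- `R : ℕ → A[λ]` is the sequence of Gelfand–Dickey polynomials:
`R 0 = 1`, each `R n` for `n ≥ 1` has zero constant term, and the Lenard recursion
`(2n+1) ∂ₓ R_{n+1} = u₁ R_n + 2 u₀ ∂ₓ R_n + (λ²/4) ∂ₓ³ R_n` holds. -/
def IsGD (R : ℕ → Polynomial (MvPolynomial ℕ ℝ)) : Prop :=
  R 0 = 1 ∧ (∀ n : ℕ, 1 ≤ n → NoConst (R n)) ∧
  ∀ n : ℕ,
    Polynomial.C (MvPolynomial.C (2 * (n : ℝ) + 1)) * dxP (R (n + 1)) =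
      Polynomial.C (X 1) * R n
      + Polynomial.C (MvPolynomial.C 2 * X 0) * dxP (R n)
      + Polynomial.C (MvPolynomial.C (1 / 4 : ℝ)) * Polynomial.X ^ 2
          * dxP (dxP (dxP (R n)))

theorem sum_range_reflect_mul {B : Type*} [CommSemiring B] (f g : ℕ → B) (n : ℕ) :
    ∑ i ∈ Finset.range (n + 1), f (n - i) * g i = ∑ i ∈ Finset.range (n + 1), f i * g (n - i) := by
  rw [← Finset.Nat.sum_antidiagonal_eq_sum_range_succ (fun i j => f j * g i),
    ← Finset.Nat.sum_antidiagonal_eq_sum_range_succ (fun i j => f i * g j),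
    ← Finset.Nat.sum_antidiagonal_swap]
  rfl

section LenardOperator

variable {R B : Type*} [CommRing R] [CommRing B] [Algebra R B] (D : Derivation R B B) (u c : B)

def lenardOp (q : B) : B :=
  D u * q + 2 * u * D q + c * D (D (D q))

def lenardPairing (f g : B) : B :=
  2 * u * (f * g) + c * (f * D (D g) + D (D f) * g - D f * D g)

variable {D c} in
theorem derivation_lenardPairing (hc : D c = 0) (f g : B) :
    D (lenardPairing D u c f g) = f * lenardOp D u c g + g * lenardOp D u c f := by
  have h2 : D 2 = 0 := by exact_mod_cast D.map_natCast 2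
  simp only [lenardPairing, lenardOp, Derivation.leibniz, map_add, map_sub, hc, h2, smul_eq_mul]
  ring

theorem lenardOp_smul (r : R) (q : B) : lenardOp D u c (r • q) = r • lenardOp D u c q := by
  simp only [lenardOp, Derivation.map_smul, mul_smul_comm, smul_add]

end LenardOperator

section LenardSequence

variable {K B : Type*} [Field K] [CommRing B] [Algebra K B] (D : Derivation K B B) (u c : B)

def lenardSeq : ℕ → B
  | 0 => 1
  | m + 1 => (2⁻¹ : K) • (∑ i : Fin (m + 1), lenardPairing D u c (lenardSeq i) (lenardSeq (m - i))
      - ∑ i : Fin m, lenardSeq (i + 1) * lenardSeq (m - i))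

theorem lenardSeq_zero : lenardSeq D u c 0 = 1 := by
  rw [lenardSeq]

theorem lenardSeq_succ (m : ℕ) :
    lenardSeq D u c (m + 1) = (2⁻¹ : K) •
      (∑ i ∈ Finset.range (m + 1), lenardPairing D u c (lenardSeq D u c i) (lenardSeq D u c (m - i))
        - ∑ i ∈ Finset.range m, lenardSeq D u c (i + 1) * lenardSeq D u c (m - i)) := by
  rw [lenardSeq, Finset.sum_range, Finset.sum_range]

theorem sum_range_mul_lenardSeq [NeZero (2 : K)] (m : ℕ) :
    ∑ i ∈ Finset.range (m + 2), lenardSeq D u c i * lenardSeq D u c (m + 1 - i) =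
      ∑ i ∈ Finset.range (m + 1), lenardPairing D u c (lenardSeq D u c i) (lenardSeq D u c (m - i)) := by
  rw [Finset.sum_range_succ, Finset.sum_range_succ']
  simp only [Nat.add_sub_add_right, Nat.sub_zero, Nat.sub_self, lenardSeq_zero, one_mul, mul_one]
  rw [add_assoc, ← two_smul K, lenardSeq_succ, smul_smul, mul_inv_cancel₀ two_ne_zero, one_smul,
    add_sub_cancel]

variable {D c} in
theorem derivation_lenardSeq_succ [NeZero (2 : K)] (hc : D c = 0) (m : ℕ) :
    D (lenardSeq D u c (m + 1)) = lenardOp D u c (lenardSeq D u c m) := by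
  induction m using Nat.strong_induction_on with
  | _ m ih =>
  have hconv : ∑ i ∈ Finset.range (m + 2), lenardSeq D u c i * D (lenardSeq D u c (m + 1 - i)) =
      ∑ i ∈ Finset.range (m + 1), lenardSeq D u c i * lenardOp D u c (lenardSeq D u c (m - i)) := by
    have h := congrArg D (sum_range_mul_lenardSeq D u c m)
    simp only [map_sum, Derivation.leibniz, smul_eq_mul, derivation_lenardPairing u hc,
      Finset.sum_add_distrib] at h
    rw [sum_range_reflect_mul, sum_range_reflect_mul, ← two_smul K, ← two_smul K] at h
    exact smul_right_injective B two_ne_zero h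
  -- all terms of `hconv` but the one with `i = 0` cancel by the induction hypothesis
  have hterms : ∀ k ∈ Finset.range m,
      lenardSeq D u c (k + 1) * D (lenardSeq D u c (m + 1 - (k + 1))) =
        lenardSeq D u c (k + 1) * lenardOp D u c (lenardSeq D u c (m - (k + 1))) := by
    intro k hk
    rw [Finset.mem_range] at hk
    rw [show m + 1 - (k + 1) = m - (k + 1) + 1 by omega, ih _ (by omega)]
  rw [Finset.sum_range_succ, Nat.sub_self, lenardSeq_zero, Derivation.map_one_eq_zero, mul_zero,
    add_zero, Finset.sum_range_succ', Finset.sum_range_succ', Finset.sum_congr rfl hterms,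
    add_right_inj, lenardSeq_zero, one_mul, one_mul, Nat.sub_zero, Nat.sub_zero] at hconv
  exact hconv

theorem map_lenardSeq_succ {S : Type*} [CommRing S] (φ : B →+* S) (hD : ∀ b, φ (D b) = 0)
    (hu : φ u = 0) (m : ℕ) : φ (lenardSeq D u c (m + 1)) = 0 := by
  induction m using Nat.strong_induction_on with
  | _ m ih =>
  have hpairing (f g : B) : φ (lenardPairing D u c f g) = 0 := by
    simp [lenardPairing, hD, hu]
  have hproducts : ∀ i ∈ Finset.range m, φ (lenardSeq D u c (i + 1) * lenardSeq D u c (m - i)) = 0 :=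
    fun i hi => by rw [map_mul, ih i (Finset.mem_range.mp hi), zero_mul]
  rw [lenardSeq_succ, Algebra.smul_def, map_mul, map_sub, map_sum, map_sum,
    Finset.sum_eq_zero fun i _ => hpairing _ _, Finset.sum_eq_zero hproducts, sub_zero, mul_zero]

def gelfandDickeySeq (n : ℕ) : B :=
  (∏ k ∈ Finset.range n, (2 * k + 1 : K))⁻¹ • lenardSeq D u c n

theorem gelfandDickeySeq_zero : gelfandDickeySeq D u c 0 = 1 := by
  rw [gelfandDickeySeq, Finset.prod_range_zero, inv_one, one_smul, lenardSeq_zero]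

theorem map_gelfandDickeySeq_succ {S : Type*} [CommRing S] (φ : B →+* S) (hD : ∀ b, φ (D b) = 0)
    (hu : φ u = 0) (n : ℕ) : φ (gelfandDickeySeq D u c (n + 1)) = 0 := by
  rw [gelfandDickeySeq, Algebra.smul_def, map_mul, map_lenardSeq_succ D u c φ hD hu, mul_zero]

variable [CharZero K]

theorem lenardSeq_one : lenardSeq D u c 1 = u := by
  rw [lenardSeq_succ]
  simp only [zero_add, Finset.range_one, lenardPairing, zero_tsub, lenardSeq_zero, mul_one,
    Derivation.map_one_eq_zero, map_zero, mul_zero, sub_zero, Finset.sum_singleton, add_zero,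
    Finset.range_zero, Finset.sum_empty]
  algebra

theorem lenardSeq_two : lenardSeq D u c 2 = (3 / 2 : K) • u ^ 2 + c * D (D u) := by
  rw [lenardSeq_succ]
  simp only [Nat.reduceAdd, lenardPairing, Finset.sum_range_succ, Finset.range_one,
    Finset.sum_singleton, lenardSeq_zero, tsub_zero, lenardSeq_one, one_mul,
    Derivation.map_one_eq_zero, map_zero, zero_mul, add_zero, sub_zero, tsub_self, mul_one,
    mul_zero, zero_add]
  algebra

theorem gelfandDickeySeq_one : gelfandDickeySeq D u c 1 = u := by
  simp [gelfandDickeySeq, lenardSeq_one]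

theorem gelfandDickeySeq_two :
    gelfandDickeySeq D u c 2 = (2⁻¹ : K) • u ^ 2 + (3⁻¹ : K) • (c * D (D u)) := by
  simp only [gelfandDickeySeq, lenardSeq_two, Finset.prod_range_succ, Finset.prod_range_zero]
  algebra

variable {D c} in
theorem smul_derivation_gelfandDickeySeq_succ (hc : D c = 0) (n : ℕ) :
    (2 * n + 1 : K) • D (gelfandDickeySeq D u c (n + 1)) =
      lenardOp D u c (gelfandDickeySeq D u c n) := by
  have hn : (2 * n + 1 : K) ≠ 0 := by exact_mod_cast (2 * n).succ_ne_zero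
  rw [gelfandDickeySeq, gelfandDickeySeq, Derivation.map_smul, derivation_lenardSeq_succ u hc,
    lenardOp_smul, smul_smul, Finset.prod_range_succ, mul_inv, mul_left_comm, mul_inv_cancel₀ hn,
    mul_one]

variable {D c} in
theorem eq_gelfandDickeySeq {S : Type*} [CommRing S] (φ : B →+* S) (hD : ∀ b, φ (D b) = 0)
    (hu : φ u = 0) (hc : D c = 0) (hker : ∀ b, D b = 0 → φ b = 0 → b = 0) (R : ℕ → B)
    (h0 : R 0 = 1) (hφ : ∀ n, φ (R (n + 1)) = 0)
    (hrec : ∀ n : ℕ, (2 * n + 1 : K) • D (R (n + 1)) = lenardOp D u c (R n)) :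
    R = gelfandDickeySeq D u c := by
  funext n
  induction n with
  | zero => rw [h0, gelfandDickeySeq_zero]
  | succ n ih =>
    have hn : (2 * n + 1 : K) ≠ 0 := by exact_mod_cast (2 * n).succ_ne_zero
    have hDeq : D (R (n + 1)) = D (gelfandDickeySeq D u c (n + 1)) := by
      refine smul_right_injective B hn ?_
      dsimp only
      rw [hrec, smul_derivation_gelfandDickeySeq_succ u hc, ih]
    rw [← sub_eq_zero]
    refine hker _ (by rw [map_sub, hDeq, sub_self]) ?_
    rw [map_sub, hφ, map_gelfandDickeySeq_succ D u c φ hD hu, sub_self]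

end LenardSequence

namespace MvPolynomial

variable {σ R : Type*}

theorem derivation_apply_eq_sum_vars [CommSemiring R]
    (D : Derivation R (MvPolynomial σ R) (MvPolynomial σ R)) (f : MvPolynomial σ R) :
    D f = ∑ i ∈ f.vars, D (X i) * pderiv i f := by
  classical
  let D' : Derivation R (MvPolynomial σ R) (MvPolynomial σ R) :=
    ∑ i ∈ f.vars, D (X i) • pderiv i
  have hD' (g : MvPolynomial σ R) : D' g = ∑ i ∈ f.vars, D (X i) * pderiv i g := by
    rw [← Derivation.coeFnAddMonoidHom_apply, map_sum, Finset.sum_apply]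
    rfl
  rw [← hD']
  refine derivation_eq_of_forall_mem_vars fun i hi => ?_
  rw [hD', Finset.sum_eq_single_of_mem i hi fun j _ hji => by rw [pderiv_X_of_ne hji.symm, mul_zero],
    pderiv_X_self, mul_one]

theorem eq_C_of_forall_pderiv_eq_zero [CommSemiring R] [NoZeroDivisors R] [CharZero R]
    {f : MvPolynomial σ R} (h : ∀ i, pderiv i f = 0) : f = C (coeff 0 f) := by
  classical
  ext m
  rw [coeff_C]
  split_ifs with hm
  · rw [hm]
  obtain ⟨i, hi⟩ : ∃ i, m i ≠ 0 := by
    by_contra! hzero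
    exact hm (Finsupp.ext hzero).symm
  obtain ⟨m', rfl⟩ : ∃ m', m = m' + Finsupp.single i 1 :=
    ⟨m - Finsupp.single i 1, (tsub_add_cancel_of_le (Finsupp.single_le_iff.mpr (by omega))).symm⟩
  have := coeff_pderiv (i := i) f m'
  rw [h i, coeff_zero, eq_comm, mul_eq_zero] at this
  exact this.resolve_right (Nat.cast_add_one_ne_zero _)

variable (R) in
noncomputable def totalDeriv [CommSemiring R] : Derivation R (MvPolynomial ℕ R) (MvPolynomial ℕ R) :=
  mkDerivation R fun k => X (k + 1)

@[simp]
theorem totalDeriv_X [CommSemiring R] (k : ℕ) : totalDeriv R (X k) = X (k + 1) :=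
  mkDerivation_X R _ k

theorem constantCoeff_totalDeriv [CommSemiring R] (f : MvPolynomial ℕ R) :
    constantCoeff (totalDeriv R f) = 0 := by
  simp [derivation_apply_eq_sum_vars (totalDeriv R) f]

theorem lie_pderiv_succ_totalDeriv [CommRing R] (n : ℕ) :
    ⁅(pderiv (n + 1) : Derivation R _ _), totalDeriv R⁆ = pderiv n := by
  classical
  refine derivation_ext fun k => ?_
  rw [Derivation.commutator_apply, totalDeriv_X, pderiv_X, pderiv_X, pderiv_X]
  simp [Pi.single_apply, apply_ite (totalDeriv R)]

theorem pderiv_eq_zero_of_totalDeriv_eq_zero [CommRing R] {f : MvPolynomial ℕ R}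
    (hf : totalDeriv R f = 0) (k : ℕ) : pderiv k f = 0 := by
  obtain ⟨N, hN⟩ : ∃ N, ∀ k ∉ Finset.range N, pderiv k f = 0 :=
    ⟨f.vars.sup id + 1, fun k hk => pderiv_eq_zero_of_notMem_vars fun hkf => hk <|
      Finset.mem_range.mpr (Nat.lt_succ_of_le (Finset.le_sup (f := id) hkf))⟩
  by_cases hk : k < N
  · refine Nat.decreasingInduction (motive := fun k _ => pderiv k f = 0) (fun n _ hn => ?_)
      (hN N (by simp)) hk.le
    rw [← lie_pderiv_succ_totalDeriv, Derivation.commutator_apply, hf, hn, map_zero, map_zero,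
      sub_zero]
  · exact hN k (by simpa using hk)

theorem eq_zero_of_totalDeriv_eq_zero [CommRing R] [IsDomain R] [CharZero R]
    {f : MvPolynomial ℕ R} (hf : totalDeriv R f = 0) (h0 : coeff 0 f = 0) : f = 0 := by
  rw [eq_C_of_forall_pderiv_eq_zero (pderiv_eq_zero_of_totalDeriv_eq_zero hf), h0, C_0]

end MvPolynomial

theorem dx_eq_totalDeriv : dx = totalDeriv ℝ := by
  ext f
  rw [dx, finsum_eq_sum_of_support_subset (s := f.vars), derivation_apply_eq_sum_vars]
  · simp only [totalDeriv_X]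
  · intro k hk
    by_contra hkf
    exact hk (by simp only [pderiv_eq_zero_of_notMem_vars hkf, mul_zero])

namespace Derivation
variable {R A : Type*} [CommRing R] [CommRing A] [Algebra R A] (d : Derivation R A A)

noncomputable def mapCoeffsSelf : Derivation R (Polynomial A) (Polynomial A) :=
  PolynomialModule.equivPolynomialSelf.compDer d.mapCoeffs

@[simp]
theorem coeff_mapCoeffsSelf (p : Polynomial A) (i : ℕ) :
    (d.mapCoeffsSelf p).coeff i = d (p.coeff i) :=
  rfl

theorem mapCoeffsSelf_C (a : A) : d.mapCoeffsSelf (Polynomial.C a) = Polynomial.C (d a) := by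
  ext i : 1
  rw [coeff_mapCoeffsSelf, Polynomial.coeff_C, Polynomial.coeff_C, apply_ite d, map_zero]

end Derivation

theorem dxP_eq_mapCoeffsSelf : dxP = (totalDeriv ℝ).mapCoeffsSelf := by
  ext p i : 2
  rw [dxP, dx_eq_totalDeriv, Derivation.coeff_mapCoeffsSelf, Polynomial.sum_def,
    Polynomial.finsetSum_coeff]
  simp only [Polynomial.coeff_C_mul_X_pow, Finset.sum_ite_eq, Polynomial.mem_support_iff]
  split_ifs with hi
  · rfl
  · rw [not_not.mp hi, map_zero]

local notation "∂" => Derivation.mapCoeffsSelf (totalDeriv ℝ)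

theorem map_constantCoeff_mapCoeffsSelf (p : Polynomial (MvPolynomial ℕ ℝ)) :
    (∂ p).map constantCoeff = 0 := by
  ext i : 1
  rw [Polynomial.coeff_map, Derivation.coeff_mapCoeffsSelf, constantCoeff_totalDeriv,
    Polynomial.coeff_zero]

theorem eq_zero_of_mapCoeffsSelf_eq_zero {p : Polynomial (MvPolynomial ℕ ℝ)} (hp : ∂ p = 0)
    (h0 : p.map constantCoeff = 0) : p = 0 := by
  ext i : 1
  refine eq_zero_of_totalDeriv_eq_zero ?_ ?_
  · rw [← Derivation.coeff_mapCoeffsSelf, hp, Polynomial.coeff_zero]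
  · rw [← constantCoeff_eq, ← Polynomial.coeff_map, h0, Polynomial.coeff_zero]

theorem mapCoeffsSelf_C_mul_X_pow (r : ℝ) (n : ℕ) :
    ∂ (Polynomial.C (C r) * Polynomial.X ^ n) = 0 := by
  ext i : 1
  rw [Derivation.coeff_mapCoeffsSelf, Polynomial.coeff_C_mul_X_pow, apply_ite (totalDeriv ℝ),
    derivation_C, map_zero, ite_self, Polynomial.coeff_zero]

theorem noConst_iff (p : Polynomial (MvPolynomial ℕ ℝ)) : NoConst p ↔ p.map constantCoeff = 0 := by
  simp [NoConst, Polynomial.ext_iff, constantCoeff_eq]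

theorem isGD_iff (R : ℕ → Polynomial (MvPolynomial ℕ ℝ)) :
    IsGD R ↔ R 0 = 1 ∧ (∀ n, (R (n + 1)).map constantCoeff = 0) ∧
      ∀ n : ℕ, (2 * n + 1 : ℝ) • ∂ (R (n + 1)) =
        lenardOp ∂ (Polynomial.C (X 0)) (Polynomial.C (C (1 / 4)) * Polynomial.X ^ 2) (R n) := by
  simp only [IsGD, noConst_iff, dxP_eq_mapCoeffsSelf, lenardOp, Derivation.mapCoeffsSelf_C,
    totalDeriv_X, Algebra.smul_def, Polynomial.algebraMap_apply, MvPolynomial.algebraMap_eq,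
    map_mul, map_ofNat, zero_add]
  refine and_congr_right fun _ => and_congr_left fun _ =>
    ⟨fun h n => h (n + 1) (Nat.le_add_left 1 n), fun h n hn => ?_⟩
  obtain ⟨m, rfl⟩ := Nat.exists_eq_add_of_le' hn
  exact h m

/-- there is a unique sequence `(R_n)` in `A[λ]` with `R 0 = 1`,
zero constant term for `n ≥ 1`, and satisfying the Lenard recursion; moreover
`R 1 = u₀` and `R 2 = u₀²/2 + (λ²/12) u₂`. -/
theorem gelfandDickey_exists_unique :
    ∃ R : ℕ → Polynomial (MvPolynomial ℕ ℝ), IsGD R ∧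
      R 1 = Polynomial.C (X 0) ∧
      R 2 = Polynomial.C (MvPolynomial.C (1 / 2 : ℝ) * X 0 ^ 2)
            + Polynomial.C (MvPolynomial.C (1 / 12 : ℝ) * X 2) * Polynomial.X ^ 2 ∧
      ∀ R' : ℕ → Polynomial (MvPolynomial ℕ ℝ), IsGD R' → R' = R := by
  set u : Polynomial (MvPolynomial ℕ ℝ) := Polynomial.C (X 0)
  set c : Polynomial (MvPolynomial ℕ ℝ) := Polynomial.C (C (1 / 4)) * Polynomial.X ^ 2
  have hc : ∂ c = 0 := mapCoeffsSelf_C_mul_X_pow _ _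
  have hD := map_constantCoeff_mapCoeffsSelf
  have hu : u.map constantCoeff = 0 := by simp [u]
  refine ⟨gelfandDickeySeq ∂ u c, (isGD_iff _).2 ⟨gelfandDickeySeq_zero _ _ _,
    map_gelfandDickeySeq_succ ∂ u c (Polynomial.mapRingHom constantCoeff) hD hu,
    smul_derivation_gelfandDickeySeq_succ _ hc⟩, gelfandDickeySeq_one _ _ _, ?_, fun R' hR' => ?_⟩
  · rw [gelfandDickeySeq_two, Derivation.mapCoeffsSelf_C, totalDeriv_X, Derivation.mapCoeffsSelf_C,
      totalDeriv_X]
    simp only [u, c, Polynomial.C_mul, map_pow, ← MvPolynomial.algebraMap_eq, ← Polynomial.algebraMap_apply]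
    algebra
  · obtain ⟨h0, hφ, hrec⟩ := (isGD_iff R').1 hR'
    exact eq_gelfandDickeySeq u (Polynomial.mapRingHom constantCoeff) hD hu hc
      (fun _ => eq_zero_of_mapCoeffsSelf_eq_zero) R' h0 hφ hrec
end

section
/- Suppose u ∈ ℝ[[λ]][[t_0, t_1, t_2, …]] satisfies the string equation u = Σ_{k≥1} t_k R_k[u] + t_0 (the infinite sum being well-defined coefficientwise). Then ∂/∂t_0 ( Σ_{n≥0} (t_n − δ_{n,1}) T_n[u] ) = u, where δ_{n,1} is the Kronecker delta. (Equivalently, λ² ∂F/∂t_0 − Σ_{n≥0}(t_n − δ_{n,1}) T_n[u] is independent of t_0 for any F with λ² ∂²F/∂t_0² = u.) -/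
open MvPolynomial

/-- `T : ℕ → A[λ]` is the sequence of antiderivatives: each `T n` has zero
constant term and `∂ₓ T_n = u₁ · R_n`. -/
def IsT (R T : ℕ → Polynomial (MvPolynomial ℕ ℝ)) : Prop :=
  ∀ n : ℕ, NoConst (T n) ∧ dxP (T n) = Polynomial.C (X 1) * R n

/-- Formal partial derivative `∂/∂t₀` on `MvPowerSeries ℕ S`, defined coefficientwise:
`(∂f/∂t₀)` has `m`-th coefficient `(m₀+1)` times the `(m + e₀)`-th coefficient of `f`. -/
noncomputable def D0 {S : Type*} [CommSemiring S] (f : MvPowerSeries ℕ S) :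
    MvPowerSeries ℕ S :=
  fun m => (m 0 + 1 : ℕ) • MvPowerSeries.coeff (R := S) (m + Finsupp.single 0 1) f

/-- Substitution `P ↦ P[u]`: substitute `u_k ↦ v k` and `λ ↦ lam` in `P ∈ A[λ]`. -/
noncomputable def substP {S : Type*} [CommRing S] [Algebra ℝ S]
    (lam : S) (v : ℕ → S) (P : Polynomial (MvPolynomial ℕ ℝ)) : S :=
  Polynomial.eval₂ (MvPolynomial.aeval v).toRingHom lam P

/-- `P[u]` for `u ∈ ℝ[[λ]][[t₀,t₁,…]]`: substitute `u_k ↦ ∂_{t₀}^k u` and `λ ↦ λ`. -/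
noncomputable def sb (u : MvPowerSeries ℕ (PowerSeries ℝ))
    (P : Polynomial (MvPolynomial ℕ ℝ)) : MvPowerSeries ℕ (PowerSeries ℝ) :=
  substP (MvPowerSeries.C (σ := ℕ) (R := PowerSeries ℝ) PowerSeries.X) (fun k => D0^[k] u) P

/-!
Differentiating term by term, `∂₀ t_n = δ_{n,0}` and, by the chain rule for the substitution
`u_k ↦ ∂₀^k u`, `∂₀ T_n[u] = (∂ₓ T_n)[u] = u_x R_n[u]`. Hence
`∂₀ Σ (t_n - δ_{n,1}) T_n[u] = T_0[u] + u_x (Σ t_n R_n[u] - R_1[u])`.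
The kernel of `∂ₓ` consists of the constants, so an antiderivative without constant term is
unique; this gives `T_0 = u_0` and (from the first Lenard step) `R_1 = u_0`. With `R_0 = 1`
the string equation says exactly `Σ t_n R_n[u] = u`, so the bracket vanishes and the derivative
is `T_0[u] = u`.
-/

lemma MvPolynomial.vars_pderiv_subset {σ R : Type*} [CommSemiring R] (i : σ)
    (f : MvPolynomial σ R) : (pderiv i f).vars ⊆ f.vars := by
  classical
  intro j hj
  obtain ⟨d, hd, hjd⟩ := (mem_vars_iff_mem_support j).1 hj
  rw [mem_support_iff, coeff_pderiv] at hd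
  refine (mem_vars_iff_mem_support j).2
    ⟨d + Finsupp.single i 1, mem_support_iff.2 (left_ne_zero_of_mul hd), ?_⟩
  rw [Finsupp.mem_support_iff] at hjd ⊢
  rw [Finsupp.add_apply]
  omega

lemma MvPolynomial.notMem_vars_of_pderiv_eq_zero {σ R : Type*} [CommSemiring R]
    [NoZeroDivisors R] [CharZero R] {i : σ} {f : MvPolynomial σ R} (h : pderiv i f = 0) :
    i ∉ f.vars := by
  classical
  intro hi
  obtain ⟨d, hd, hid⟩ := (mem_vars_iff_mem_support i).1 hi
  rw [Finsupp.mem_support_iff] at hid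
  have hle : Finsupp.single i 1 ≤ d := Finsupp.single_le_iff.2 (Nat.one_le_iff_ne_zero.2 hid)
  have hcoeff := congrArg (coeff (d - Finsupp.single i 1)) h
  rw [coeff_pderiv, coeff_zero, tsub_add_cancel_of_le hle, Finsupp.tsub_apply,
    Finsupp.single_eq_same] at hcoeff
  rcases mul_eq_zero.1 hcoeff with h0 | h0
  · exact (mem_support_iff.1 hd) h0
  · norm_cast at h0

lemma dx_eq_sum_range {f : MvPolynomial ℕ ℝ} {N : ℕ} (hf : f.vars ⊆ Finset.range N) :
    dx f = ∑ k ∈ Finset.range N, X (k + 1) * pderiv k f := by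
  refine finsum_eq_sum_of_support_subset _ fun k hk => hf ?_
  by_contra hkf
  exact hk (by simp only [pderiv_eq_zero_of_notMem_vars hkf, mul_zero])

noncomputable def dxDerivation : Derivation ℝ (MvPolynomial ℕ ℝ) (MvPolynomial ℕ ℝ) :=
  mkDerivation ℝ fun k => X (k + 1)

lemma coe_dxDerivation : ⇑dxDerivation = dx := by
  funext f
  obtain ⟨N, hN⟩ := f.vars.exists_nat_subset_range
  rw [dx_eq_sum_range hN]
  let D : Derivation ℝ (MvPolynomial ℕ ℝ) (MvPolynomial ℕ ℝ) :=
    ∑ k ∈ Finset.range N, (X (k + 1) : MvPolynomial ℕ ℝ) • pderiv k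
  have hD : ∀ g, D g = ∑ k ∈ Finset.range N, X (k + 1) * pderiv k g := fun g => by
    change Derivation.coeFnAddMonoidHom _ g = _
    rw [map_sum, Finset.sum_apply]
    rfl
  have hX : Set.EqOn (dxDerivation ∘ X) (D ∘ X) (Finset.range N : Set ℕ) := by
    intro i hi
    classical
    simp [hD, dxDerivation, mkDerivation_X, pderiv_X, Pi.single_apply, Finset.mem_coe.1 hi]
  simpa [hD] using
    derivation_eqOn_supported hX ((mem_supported (R := ℝ)).2 (by exact_mod_cast hN))

lemma dxDerivation_X (k : ℕ) : dxDerivation (X k) = X (k + 1) :=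
  mkDerivation_X ℝ _ k

lemma dx_zero : dx 0 = 0 := by
  rw [← coe_dxDerivation, map_zero]

lemma dx_X (k : ℕ) : dx (X k) = X (k + 1) := by
  rw [← coe_dxDerivation, dxDerivation_X]

lemma pderiv_succ_dx {f : MvPolynomial ℕ ℝ} {N : ℕ} (hf : f.vars ⊆ Finset.range (N + 1)) :
    pderiv (N + 1) (dx f) = pderiv N f := by
  classical
  have hvanish : ∀ k, pderiv (N + 1) (pderiv k f) = 0 := fun k =>
    pderiv_eq_zero_of_notMem_vars fun h => by
      simpa using hf (vars_pderiv_subset k f h)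
  rw [dx_eq_sum_range hf, map_sum, Finset.sum_eq_single N]
  · simp [hvanish]
  · intro k _ hk
    simp [hvanish, pderiv_X, hk]
  · simp

lemma eq_C_of_dx_eq_zero {f : MvPolynomial ℕ ℝ} (h : dx f = 0) : f = C (coeff 0 f) := by
  rw [← vars_eq_empty_iff_eq_C]
  obtain ⟨N, hN⟩ := f.vars.exists_nat_subset_range
  induction N with
  | zero => simpa using hN
  | succ N ih =>
    have hN' : N ∉ f.vars :=
      notMem_vars_of_pderiv_eq_zero (by rw [← pderiv_succ_dx hN, h, map_zero])
    refine ih fun k hk => Finset.mem_range.2 ?_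
    have hkN : k ≠ N := fun hkN => hN' (hkN ▸ hk)
    have := Finset.mem_range.1 (hN hk)
    omega

lemma coeff_dxP (p : Polynomial (MvPolynomial ℕ ℝ)) (n : ℕ) :
    (dxP p).coeff n = dx (p.coeff n) := by
  rw [dxP, Polynomial.sum_def, Polynomial.finsetSum_coeff]
  simp_rw [Polynomial.coeff_C_mul_X_pow]
  rw [Finset.sum_ite_eq]
  split_ifs with hn
  · rfl
  · rw [Polynomial.notMem_support_iff.1 hn, dx_zero]

lemma dxP_add (p q : Polynomial (MvPolynomial ℕ ℝ)) : dxP (p + q) = dxP p + dxP q := by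
  ext1 n
  simp only [coeff_dxP, Polynomial.coeff_add, ← coe_dxDerivation, map_add]

lemma dxP_monomial (n : ℕ) (a : MvPolynomial ℕ ℝ) :
    dxP (Polynomial.monomial n a) = Polynomial.monomial n (dx a) := by
  ext1 m
  rw [coeff_dxP, Polynomial.coeff_monomial, Polynomial.coeff_monomial]
  split_ifs
  · rfl
  · exact dx_zero

lemma dxP_C (a : MvPolynomial ℕ ℝ) : dxP (Polynomial.C a) = Polynomial.C (dx a) := by
  simpa using dxP_monomial 0 a

lemma dxP_zero : dxP 0 = 0 :=
  Polynomial.sum_zero_index _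

lemma dxP_one : dxP 1 = 0 := by
  rw [← Polynomial.C_1, dxP_C, ← coe_dxDerivation, Derivation.map_one_eq_zero, Polynomial.C_0]

lemma NoConst.eq_of_dxP_eq {p q : Polynomial (MvPolynomial ℕ ℝ)} (hp : NoConst p)
    (hq : NoConst q) (h : dxP p = dxP q) : p = q := by
  refine Polynomial.ext fun n => ?_
  have hdx : dx (p.coeff n - q.coeff n) = 0 := by
    rw [← coe_dxDerivation, map_sub, coe_dxDerivation, ← coeff_dxP, ← coeff_dxP, h, sub_self]
  have := eq_C_of_dx_eq_zero hdx
  rw [coeff_sub, hp n, hq n, sub_self, C_0] at this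
  exact sub_eq_zero.1 this

lemma noConst_C_X (k : ℕ) : NoConst (Polynomial.C (X k)) := by
  intro i
  rw [Polynomial.coeff_C]
  split_ifs
  · exact coeff_zero_X k
  · exact coeff_zero 0

lemma IsGD.apply_one {R : ℕ → Polynomial (MvPolynomial ℕ ℝ)} (hR : IsGD R) :
    R 1 = Polynomial.C (X 0) := by
  obtain ⟨hR0, hnc, hrec⟩ := hR
  refine (hnc 1 le_rfl).eq_of_dxP_eq (noConst_C_X 0) ?_
  simpa [hR0, dxP_zero, dxP_one, dxP_C, dx_X] using hrec 0

lemma IsT.apply_zero {R T : ℕ → Polynomial (MvPolynomial ℕ ℝ)} (hT : IsT R T)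
    (hR0 : R 0 = 1) : T 0 = Polynomial.C (X 0) :=
  (hT 0).1.eq_of_dxP_eq (noConst_C_X 0) (by rw [(hT 0).2, hR0, mul_one, dxP_C, dx_X])

section Chain

variable {B : Type*} [CommRing B] [Algebra ℝ B] (D : Derivation ℝ B B) {v : ℕ → B}

lemma Derivation.map_aeval_eq_aeval_dx (hv : ∀ k, D (v k) = v (k + 1))
    (a : MvPolynomial ℕ ℝ) : D (aeval v a) = aeval v (dx a) := by
  rw [← coe_dxDerivation]
  induction a using MvPolynomial.induction_on with
  | C r => simp [derivation_C]
  | add p q hp hq => simp only [map_add, hp, hq]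
  | mul_X p k hp =>
    simp only [map_mul, Derivation.leibniz, hp, aeval_X, hv, smul_eq_mul, dxDerivation_X,
      map_add]

lemma Derivation.map_substP (hv : ∀ k, D (v k) = v (k + 1)) {lam : B} (hlam : D lam = 0)
    (P : Polynomial (MvPolynomial ℕ ℝ)) : D (substP lam v P) = substP lam v (dxP P) := by
  induction P using Polynomial.induction_on' with
  | add p q hp hq =>
    simp only [substP, Polynomial.eval₂_add, map_add, dxP_add] at hp hq ⊢
    rw [hp, hq]
  | monomial n a =>
    simp [substP, dxP_monomial, Derivation.leibniz, Derivation.leibniz_pow, hlam,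
      D.map_aeval_eq_aeval_dx hv, mul_comm]

end Chain

lemma D0_eq_pderiv {S : Type*} [CommSemiring S] :
    (D0 : MvPowerSeries ℕ S → MvPowerSeries ℕ S) = MvPowerSeries.pderiv S 0 := by
  funext f
  ext m
  rw [MvPowerSeries.coeff_pderiv]
  change (m 0 + 1 : ℕ) • MvPowerSeries.coeff (m + Finsupp.single 0 1) f = _
  rw [nsmul_eq_mul, mul_comm]
  push_cast
  rfl

lemma finsum_nat_eq_zero_add {M : Type*} [AddCommMonoid M] {f : ℕ → M}
    (hf : Function.HasFiniteSupport f) : ∑ᶠ n, f n = f 0 + ∑ᶠ n, f (n + 1) := by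
  rw [← finsum_mem_univ, ← Nat.zero_union_range_succ, ← Set.insert_eq,
    finsum_mem_insert' f (by simp) (hf.subset Set.inter_subset_right),
    finsum_mem_range Nat.succ_injective]

namespace MvPowerSeries

variable {σ ι S : Type*} [CommSemiring S]

def CoeffFinite (f : ι → MvPowerSeries σ S) : Prop :=
  ∀ m, Function.HasFiniteSupport fun i => coeff m (f i)

/-- The coefficientwise sum `Σ_i f_i`; it is only meaningful under `CoeffFinite f`, since
`finsum` returns `0` on families of infinite support. -/
noncomputable def coeffSum (f : ι → MvPowerSeries σ S) : MvPowerSeries σ S :=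
  fun m => ∑ᶠ i, coeff m (f i)

lemma coeff_coeffSum (f : ι → MvPowerSeries σ S) (m : σ →₀ ℕ) :
    coeff m (coeffSum f) = ∑ᶠ i, coeff m (f i) :=
  rfl

lemma coeffFinite_single [DecidableEq ι] (i : ι) (a : MvPowerSeries σ S) :
    CoeffFinite (Pi.single i a) := fun m =>
  (Set.finite_singleton i).subset fun j hj => by
    by_contra hji
    exact hj (by simp [Set.mem_singleton_iff.not.1 hji])

lemma coeff_X_mul_eq_zero {m : σ →₀ ℕ} {i : σ} (h : m i = 0) (φ : MvPowerSeries σ S) :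
    coeff m (X i * φ) = 0 := by
  classical
  rw [X_def, coeff_monomial_mul, if_neg]
  intro hle
  have := hle i
  simp [h] at this

lemma coeffFinite_X_mul (f : σ → MvPowerSeries σ S) : CoeffFinite fun i => X i * f i :=
  fun m => m.support.finite_toSet.subset fun i hi => by
    by_contra hmi
    exact hi (coeff_X_mul_eq_zero (Finsupp.notMem_support_iff.1 hmi) _)

lemma coeffSum_single [DecidableEq ι] (i : ι) (a : MvPowerSeries σ S) :
    coeffSum (Pi.single i a) = a := by
  ext m
  rw [coeff_coeffSum, finsum_eq_single _ i fun j hj => by simp [hj]]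
  simp

lemma coeffSum_add {f g : ι → MvPowerSeries σ S} (hf : CoeffFinite f) (hg : CoeffFinite g) :
    coeffSum (f + g) = coeffSum f + coeffSum g := by
  ext m
  simp only [coeff_coeffSum, map_add, Pi.add_apply, finsum_add_distrib (hf m) (hg m)]

lemma coeffSum_sub {S : Type*} [CommRing S] {f g : ι → MvPowerSeries σ S}
    (hf : CoeffFinite f) (hg : CoeffFinite g) : coeffSum (f - g) = coeffSum f - coeffSum g := by
  ext m
  simp only [coeff_coeffSum, map_sub, Pi.sub_apply, finsum_sub_distrib (hf m) (hg m)]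

lemma coeffSum_eq_zero_add {f : ℕ → MvPowerSeries σ S} (hf : CoeffFinite f) :
    coeffSum f = f 0 + coeffSum fun n => f (n + 1) := by
  ext m
  rw [map_add, coeff_coeffSum, coeff_coeffSum, finsum_nat_eq_zero_add (hf m)]

lemma pderiv_coeffSum {f : ι → MvPowerSeries σ S} (hf : CoeffFinite f) (i : σ) :
    pderiv S i (coeffSum f) = coeffSum fun j => pderiv S i (f j) := by
  ext m
  simp only [coeff_pderiv, coeff_coeffSum, finsum_mul' _ _ (hf _)]

lemma mul_coeffSum (a : MvPowerSeries σ S) {f : ι → MvPowerSeries σ S} (hf : CoeffFinite f) :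
    a * coeffSum f = coeffSum fun i => a * f i := by
  classical
  ext m
  simp only [coeff_mul, coeff_coeffSum, mul_finsum' _ _ (hf _)]
  exact sum_finsum_comm _ _ fun p _ => (hf p.2).subset
    (Function.support_mul_subset_right _ _)

lemma pderiv_coeffSum_X_mul [DecidableEq σ] (f : σ → MvPowerSeries σ S) (i : σ) :
    pderiv S i (coeffSum fun j => X j * f j) =
      (coeffSum fun j => X j * pderiv S i (f j)) + f i := by
  have hsplit : (fun j => pderiv S i (X j * f j)) =
      (fun j => X j * pderiv S i (f j)) + Pi.single i (f i) := by
    funext j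
    by_cases hj : j = i
    · subst hj
      simp [Derivation.leibniz]
    · simp [Derivation.leibniz, hj, pderiv_X_of_ne hj]
  rw [pderiv_coeffSum (coeffFinite_X_mul f), hsplit,
    coeffSum_add (coeffFinite_X_mul _) (coeffFinite_single _ _), coeffSum_single]

lemma pderiv_coeffSum_X_sub_ite_mul {S : Type*} [CommRing S] [DecidableEq σ]
    (g : σ → MvPowerSeries σ S) (i a : σ) :
    pderiv S i (coeffSum fun j => (X j - if j = a then 1 else 0) * g j) =
      (coeffSum fun j => X j * pderiv S i (g j)) + g i - pderiv S i (g a) := by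
  have hsplit : (fun j => (X j - if j = a then 1 else 0) * g j) =
      (fun j => X j * g j) - Pi.single a (g a) := by
    funext j
    by_cases hj : j = a
    · subst hj
      simp [sub_mul]
    · simp [hj]
  rw [hsplit, coeffSum_sub (coeffFinite_X_mul _) (coeffFinite_single _ _), coeffSum_single,
    map_sub, pderiv_coeffSum_X_mul]

end MvPowerSeries

section Substitution

variable (u : MvPowerSeries ℕ (PowerSeries ℝ))

lemma sb_C_X (k : ℕ) : sb u (Polynomial.C (X k)) = D0^[k] u := by
  simp [sb, substP]

lemma sb_one : sb u 1 = 1 :=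
  Polynomial.eval₂_one _ _

lemma sb_mul (p q : Polynomial (MvPolynomial ℕ ℝ)) : sb u (p * q) = sb u p * sb u q :=
  Polynomial.eval₂_mul _ _

lemma pderiv_sb (P : Polynomial (MvPolynomial ℕ ℝ)) :
    MvPowerSeries.pderiv (PowerSeries ℝ) 0 (sb u P) = sb u (dxP P) := by
  refine ((MvPowerSeries.pderiv (PowerSeries ℝ) 0).restrictScalars ℝ).map_substP ?_ ?_ P
  · intro k
    simp [← D0_eq_pderiv, Function.iterate_succ_apply']
  · simp

end Substitution

/-- if `u ∈ ℝ[[λ]][[t₀,t₁,…]]` satisfies the string equation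
`u = Σ_{k≥1} t_k R_k[u] + t₀` (coefficientwise), then
`∂/∂t₀ (Σ_{n≥0} (t_n − δ_{n,1}) T_n[u]) = u`. -/
theorem mean_field_potential (R T : ℕ → Polynomial (MvPolynomial ℕ ℝ))
    (hR : IsGD R) (hT : IsT R T)
    (u : MvPowerSeries ℕ (PowerSeries ℝ))
    (hu : ∀ m : ℕ →₀ ℕ,
      MvPowerSeries.coeff (R := PowerSeries ℝ) m u =
        (∑ᶠ k : ℕ, MvPowerSeries.coeff (R := PowerSeries ℝ) m
            (MvPowerSeries.X (k + 1) * sb u (R (k + 1))))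
        + MvPowerSeries.coeff (R := PowerSeries ℝ) m (MvPowerSeries.X 0)) :
    D0 (fun m => ∑ᶠ n : ℕ, MvPowerSeries.coeff (R := PowerSeries ℝ) m
          ((MvPowerSeries.X n - if n = 1 then 1 else 0) * sb u (T n))
        : MvPowerSeries ℕ (PowerSeries ℝ)) = u := by
  have hT0 : sb u (T 0) = u := by rw [hT.apply_zero hR.1, sb_C_X, Function.iterate_zero_apply]
  have hR1 : sb u (R 1) = u := by rw [hR.apply_one, sb_C_X, Function.iterate_zero_apply]
  have hderiv (n : ℕ) : MvPowerSeries.pderiv _ 0 (sb u (T n)) =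
      MvPowerSeries.pderiv _ 0 u * sb u (R n) := by
    rw [pderiv_sb, (hT n).2, sb_mul, sb_C_X, Function.iterate_one, D0_eq_pderiv]
  have hstring : MvPowerSeries.coeffSum (fun n => MvPowerSeries.X n * sb u (R n)) = u := by
    rw [MvPowerSeries.coeffSum_eq_zero_add (MvPowerSeries.coeffFinite_X_mul _), hR.1, sb_one,
      mul_one, add_comm]
    refine MvPowerSeries.ext fun m => ?_
    rw [map_add]
    exact (hu m).symm
  rw [D0_eq_pderiv]
  change MvPowerSeries.pderiv _ 0 (MvPowerSeries.coeffSum _) = u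
  simp_rw [MvPowerSeries.pderiv_coeffSum_X_sub_ite_mul, hderiv,
    mul_left_comm (MvPowerSeries.X _)]
  rw [← MvPowerSeries.mul_coeffSum _ (MvPowerSeries.coeffFinite_X_mul _), hstring, hT0, hR1]
  ring
end
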